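/- arXiv:1511.00764 — 3 statements merged into one kernel-verified Lean document; each statement's English description precedes it below -/
import Mathlib

section
/- For every real z > 1/3, the trigamma function satisfies ψ'(z) < 1/z + 1/z². -/
/-!
Peeling off the first term gives `ψ'(z) = 1/z² + ψ'(z + 1)`. For `x > 1/2` one has
`1/x² < 1/(x² - 1/4) = 1/(x - 1/2) - 1/(x + 1/2)`, so the series of `ψ'(w)` is dominated termwise
by a telescoping series with sum `1/(w - 1/2)`. Taking `w = z + 1` gives
`ψ'(z) < 1/z² + 1/(z + 1/2) < 1/z² + 1/z`.
-/

/-- The trigamma function, via its series expansion (valid for `z > 0`). -/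
noncomputable def trigamma (z : ℝ) : ℝ := ∑' j : ℕ, 1 / (z + j) ^ 2

open Filter Topology

theorem Antitone.hasSum_sub_succ {f : ℕ → ℝ} {l : ℝ} (hf : Antitone f)
    (hl : Tendsto f atTop (𝓝 l)) : HasSum (fun n => f n - f (n + 1)) (f 0 - l) := by
  rw [hasSum_iff_tendsto_nat_of_nonneg (fun n => sub_nonneg.2 (hf n.le_succ))]
  simpa only [Finset.sum_range_sub'] using hl.const_sub (f 0)

theorem hasSum_one_div_add_sub_one_div_add_succ {c : ℝ} (hc : 0 < c) :
    HasSum (fun j : ℕ => 1 / (c + j) - 1 / (c + (j + 1 : ℕ))) (1 / c) := by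
  have hanti : Antitone fun j : ℕ => 1 / (c + j) := fun i j hij => by
    dsimp only
    gcongr
  have hlim : Tendsto (fun j : ℕ => 1 / (c + j)) atTop (𝓝 0) := by
    simpa only [one_div, Function.comp_def] using
      tendsto_inv_atTop_zero.comp (tendsto_atTop_add_const_left _ c tendsto_natCast_atTop_atTop)
  simpa using hanti.hasSum_sub_succ hlim

theorem one_div_sq_lt_one_div_sub_half_sub {x : ℝ} (hx : 1 / 2 < x) :
    1 / x ^ 2 < 1 / (x - 1 / 2) - 1 / (x + 1 / 2) := by
  have hdiff : 1 / (x - 1 / 2) - 1 / (x + 1 / 2) = 1 / (x ^ 2 - 1 / 4) := by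
    rw [div_sub_div _ _ (by linarith) (by linarith)]
    congr 1 <;> ring
  rw [hdiff]
  exact one_div_lt_one_div_of_lt (by nlinarith) (by linarith)

theorem summable_one_div_add_sq (w : ℝ) : Summable fun j : ℕ => 1 / (w + j) ^ 2 := by
  simpa [add_comm] using (Real.summable_one_div_nat_add_rpow w 2).2 one_lt_two

theorem trigamma_eq_one_div_sq_add_trigamma_add_one (z : ℝ) :
    trigamma z = 1 / z ^ 2 + trigamma (z + 1) := by
  rw [trigamma, (summable_one_div_add_sq z).tsum_eq_zero_add, trigamma]
  push_cast
  simp only [add_zero, add_assoc, add_comm (1 : ℝ)]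

theorem trigamma_lt_one_div_sub_half {w : ℝ} (hw : 1 / 2 < w) : trigamma w < 1 / (w - 1 / 2) := by
  have htele := hasSum_one_div_add_sub_one_div_add_succ (c := w - 1 / 2) (by linarith)
  have hterm (j : ℕ) :
      1 / (w + j) ^ 2 < 1 / (w - 1 / 2 + j) - 1 / (w - 1 / 2 + (j + 1 : ℕ)) := by
    convert one_div_sq_lt_one_div_sub_half_sub (x := w + j) (by linarith [j.cast_nonneg (α := ℝ)]) using 3 <;>
      push_cast <;> ring
  rw [← htele.tsum_eq]
  exact (summable_one_div_add_sq w).tsum_lt_tsum (fun j => (hterm j).le) (hterm 0) htele.summable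

theorem trigamma_lt (z : ℝ) (hz : 1 / 3 < z) : trigamma z < 1 / z + 1 / z ^ 2 := by
  have hz0 : 0 < z := by linarith
  calc trigamma z = 1 / z ^ 2 + trigamma (z + 1) := trigamma_eq_one_div_sq_add_trigamma_add_one z
    _ < 1 / z ^ 2 + 1 / (z + 1 - 1 / 2) := by
      gcongr
      exact trigamma_lt_one_div_sub_half (by linarith)
    _ < 1 / z ^ 2 + 1 / z := by
      gcongr
      linarith
    _ = 1 / z + 1 / z ^ 2 := add_comm _ _
end

section
/- For every real z > 0, the digamma function satisfies 1/(2z) − 1/(12z²) < ψ(z+1) − log z < 1/(2z). -/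
/-- The digamma function: the logarithmic derivative of the Gamma function. -/
noncomputable def digamma (z : ℝ) : ℝ := deriv (fun x => Real.log (Real.Gamma x)) z

/-! With `g x = ψ (x + 1) - log x`, the recurrence `ψ (x + 1) = ψ x + x⁻¹` gives
`g (x + 1) - g x = (x + 1)⁻¹ - (log (x + 1) - log x)`, while log-convexity of `Γ` squeezes
`log x ≤ ψ (x + 1) ≤ log (x + 1)`, so `g x → 0`. A function that tends to `0` and increases
under every shift `x ↦ x + 1` is negative; applied to `g - 1/(2x)` and to
`1/(2x) - 1/(12x²) - g`, this reduces both bounds to elementary estimates of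
`log (x + 1) - log x` by the trapezoidal rule for `1/t` and its Euler–Maclaurin correction,
which in turn follow by comparing derivatives of functions vanishing at infinity. -/

open Real Filter Topology Set

lemma differentiableAt_log_Gamma {x : ℝ} (hx : 0 < x) :
    DifferentiableAt ℝ (fun x => log (Gamma x)) x :=
  (differentiableAt_Gamma fun m => by linarith [(m.cast_nonneg : (0 : ℝ) ≤ m)]).log
    (Gamma_pos_of_pos hx).ne'

lemma log_Gamma_add_one {x : ℝ} (hx : 0 < x) :
    log (Gamma (x + 1)) = log (Gamma x) + log x := by
  rw [Gamma_add_one hx.ne', log_mul hx.ne' (Gamma_pos_of_pos hx).ne', add_comm]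

lemma digamma_add_one {x : ℝ} (hx : 0 < x) : digamma (x + 1) = digamma x + x⁻¹ := by
  unfold digamma
  rw [← deriv_comp_add_const, ← deriv_log,
    ← deriv_add (differentiableAt_log_Gamma hx) (differentiableAt_log hx.ne')]
  apply EventuallyEq.deriv_eq
  filter_upwards [eventually_gt_nhds hx] with y hy using log_Gamma_add_one hy

lemma log_le_digamma_add_one {x : ℝ} (hx : 0 < x) : log x ≤ digamma (x + 1) := by
  have h := convexOn_log_Gamma.slope_le_deriv (mem_Ioi.mpr hx) (mem_Ioi.mpr (by linarith))
    (by linarith) (differentiableAt_log_Gamma (by linarith : 0 < x + 1))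
  rwa [slope_def_field, add_sub_cancel_left, div_one, Function.comp_apply, Function.comp_apply,
    log_Gamma_add_one hx, add_sub_cancel_left] at h

lemma digamma_le_log {x : ℝ} (hx : 0 < x) : digamma x ≤ log x := by
  have h := convexOn_log_Gamma.deriv_le_slope (mem_Ioi.mpr hx) (mem_Ioi.mpr (by linarith))
    (by linarith : x < x + 1) (differentiableAt_log_Gamma hx)
  rwa [slope_def_field, add_sub_cancel_left, div_one, Function.comp_apply, Function.comp_apply,
    log_Gamma_add_one hx, add_sub_cancel_left] at h

lemma tendsto_digamma_add_one_sub_log :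
    Tendsto (fun x => digamma (x + 1) - log x) atTop (𝓝 0) := by
  refine tendsto_of_tendsto_of_tendsto_of_le_of_le' tendsto_const_nhds
    (tendsto_log_comp_add_sub_log 1) ?_ ?_
  · filter_upwards [eventually_gt_atTop 0] with x hx
    linarith [log_le_digamma_add_one hx]
  · filter_upwards [eventually_gt_atTop 0] with x hx
    linarith [digamma_le_log (by linarith : 0 < x + 1)]

lemma neg_of_lt_add_one_of_tendsto_zero {F : ℝ → ℝ} {a : ℝ}
    (hstep : ∀ x, a < x → F x < F (x + 1)) (hlim : Tendsto F atTop (𝓝 0)) {z : ℝ}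
    (hz : a < z) : F z < 0 := by
  have hmono : Monotone fun n : ℕ => F (z + 1 + n) := by
    refine monotone_nat_of_le_succ fun n =>
      (hstep (z + 1 + n) (by linarith [n.cast_nonneg (α := ℝ)])).le.trans_eq ?_
    push_cast
    ring_nf
  have hle := hmono.ge_of_tendsto
    (hlim.comp (tendsto_atTop_add_const_left _ _ tendsto_natCast_atTop_atTop)) 0
  simp only [Nat.cast_zero, add_zero] at hle
  exact (hstep z hz).trans_le hle

lemma lt_of_hasDerivAt_lt_of_tendsto_sub {f g f' g' : ℝ → ℝ} {a : ℝ}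
    (hf : ∀ x, a < x → HasDerivAt f (f' x) x) (hg : ∀ x, a < x → HasDerivAt g (g' x) x)
    (hlt : ∀ x, a < x → g' x < f' x) (hlim : Tendsto (fun x => f x - g x) atTop (𝓝 0))
    {z : ℝ} (hz : a < z) : f z < g z := by
  have hmono : StrictMonoOn (fun x => f x - g x) (Ioi a) := by
    refine strictMonoOn_of_deriv_pos (convex_Ioi a) (fun x hx => ?_) fun x hx => ?_
    · exact ((hf x hx).fun_sub (hg x hx)).continuousAt.continuousWithinAt
    · rw [interior_Ioi] at hx
      rw [((hf x hx).fun_sub (hg x hx)).deriv, sub_pos]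
      exact hlt x hx
  exact sub_neg.mp (neg_of_lt_add_one_of_tendsto_zero
    (fun x hx => hmono (mem_Ioi.mpr hx) (mem_Ioi.mpr (by linarith)) (lt_add_one x)) hlim hz)

lemma hasDerivAt_log_add_one_sub_log {x : ℝ} (hx : 0 < x) :
    HasDerivAt (fun y => log (y + 1) - log y) ((x + 1)⁻¹ - x⁻¹) x := by
  have h := ((hasDerivAt_id' x).add_const 1).log (by positivity)
  simpa using h.fun_sub (hasDerivAt_log hx.ne')

lemma hasDerivAt_inv_pow (n : ℕ) {x : ℝ} (hx : x ≠ 0) :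
    HasDerivAt (fun y => y⁻¹ ^ n) (-n * x⁻¹ ^ (n + 1)) x := by
  refine ((hasDerivAt_inv hx).fun_pow n).congr_deriv ?_
  rcases n with _ | n
  · simp
  · simp only [Nat.add_sub_cancel, ← inv_pow]
    ring

lemma inv_sub_inv_add_one {x : ℝ} (h₀ : x ≠ 0) (h₁ : x + 1 ≠ 0) : x⁻¹ - (x + 1)⁻¹ = x⁻¹ * (x + 1)⁻¹ := by
  field_simp
  ring

lemma tendsto_inv_add_one_atTop : Tendsto (fun x : ℝ => (x + 1)⁻¹) atTop (𝓝 0) :=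
  tendsto_inv_atTop_zero.comp (tendsto_atTop_add_const_right _ 1 tendsto_id)

lemma log_add_one_sub_log_lt {x : ℝ} (hx : 0 < x) :
    log (x + 1) - log x < (x⁻¹ + (x + 1)⁻¹) / 2 := by
  refine lt_of_hasDerivAt_lt_of_tendsto_sub (a := 0) (g := fun y => (y⁻¹ + (y + 1)⁻¹) / 2)
    (g' := fun y => -(y⁻¹ ^ 2 + (y + 1)⁻¹ ^ 2) / 2)
    (fun y hy => hasDerivAt_log_add_one_sub_log hy)
    (fun y hy => ?_) (fun y hy => ?_) ?_ hx
  · have h1 := hasDerivAt_inv_pow 1 hy.ne'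
    have h2 := (hasDerivAt_inv_pow 1 (by positivity : y + 1 ≠ 0)).comp_add_const y 1
    simp only [pow_one] at h1 h2
    refine ((h1.add h2).div_const 2).congr_deriv ?_
    push_cast
    ring
  · have hab := inv_sub_inv_add_one hy.ne' (by positivity)
    have : 0 < (y + 1)⁻¹ := by positivity
    have : (y + 1)⁻¹ < y⁻¹ := by gcongr; linarith
    -- with `a = y⁻¹`, `b = (y + 1)⁻¹` and `a - b = a * b`, this is `0 < (a - b) ^ 2`
    nlinarith
  · simpa using (tendsto_log_comp_add_sub_log 1).sub
      ((tendsto_inv_atTop_zero.add tendsto_inv_add_one_atTop).div_const 2)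

lemma lt_log_add_one_sub_log {x : ℝ} (hx : 0 < x) :
    (x⁻¹ + (x + 1)⁻¹) / 2 - (x⁻¹ ^ 2 - (x + 1)⁻¹ ^ 2) / 12 < log (x + 1) - log x := by
  refine lt_of_hasDerivAt_lt_of_tendsto_sub (a := 0)
    (f := fun y => (y⁻¹ + (y + 1)⁻¹) / 2 - (y⁻¹ ^ 2 - (y + 1)⁻¹ ^ 2) / 12)
    (f' := fun y => -(y⁻¹ ^ 2 + (y + 1)⁻¹ ^ 2) / 2 + (y⁻¹ ^ 3 - (y + 1)⁻¹ ^ 3) / 6) (fun y hy => ?_)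
    (fun y hy => hasDerivAt_log_add_one_sub_log hy) (fun y hy => ?_) ?_ hx
  · have h1 := hasDerivAt_inv_pow 1 hy.ne'
    have h2 := (hasDerivAt_inv_pow 1 (by positivity : y + 1 ≠ 0)).comp_add_const y 1
    have h3 := hasDerivAt_inv_pow 2 hy.ne'
    have h4 := (hasDerivAt_inv_pow 2 (by positivity : y + 1 ≠ 0)).comp_add_const y 1
    simp only [pow_one] at h1 h2
    refine (((h1.add h2).div_const 2).sub ((h3.sub h4).div_const 12)).congr_deriv ?_
    push_cast
    ring
  · have hab := inv_sub_inv_add_one hy.ne' (by positivity)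
    have : 0 < (y + 1)⁻¹ := by positivity
    have : (y + 1)⁻¹ < y⁻¹ := by gcongr; linarith
    -- using `a - b = a * b`, this is `0 < (a - b) ^ 3`
    generalize y⁻¹ = a at *
    generalize (y + 1)⁻¹ = b at *
    nlinarith [pow_pos (sub_pos.2 this) 3]
  · have ha := tendsto_inv_atTop_zero (𝕜 := ℝ)
    have hb := tendsto_inv_add_one_atTop
    simpa using (((ha.add hb).div_const 2).sub (((ha.pow 2).sub (hb.pow 2)).div_const 12)).sub
      (tendsto_log_comp_add_sub_log 1)

theorem digamma_bounds (z : ℝ) (hz : 0 < z) :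
    1 / (2 * z) - 1 / (12 * z ^ 2) < digamma (z + 1) - Real.log z ∧
    digamma (z + 1) - Real.log z < 1 / (2 * z) := by
  have hstep {w : ℝ} (hw : 0 < w) : digamma (w + 1 + 1) - log (w + 1) =
      digamma (w + 1) - log w + (w + 1)⁻¹ - (log (w + 1) - log w) := by
    rw [digamma_add_one (by positivity)]
    ring
  have hinv : Tendsto (fun w : ℝ => w⁻¹) atTop (𝓝 0) := tendsto_inv_atTop_zero
  simp only [one_div, mul_inv, ← inv_pow]
  constructor
  · refine sub_neg.mp (neg_of_lt_add_one_of_tendsto_zero (a := 0)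
      (F := fun w => 2⁻¹ * w⁻¹ - 12⁻¹ * w⁻¹ ^ 2 - (digamma (w + 1) - log w))
      (fun w hw => ?_) ?_ hz)
    · linarith [hstep hw, lt_log_add_one_sub_log hw]
    · simpa using ((hinv.const_mul 2⁻¹).sub ((hinv.pow 2).const_mul 12⁻¹)).sub
        tendsto_digamma_add_one_sub_log
  · refine sub_neg.mp (neg_of_lt_add_one_of_tendsto_zero (a := 0)
      (F := fun w => digamma (w + 1) - log w - 2⁻¹ * w⁻¹) (fun w hw => ?_) ?_ hz)
    · linarith [hstep hw, log_add_one_sub_log_lt hw]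
    · simpa using tendsto_digamma_add_one_sub_log.sub (hinv.const_mul 2⁻¹)
end

section
/- For every real z > 0, log Γ(z) = (1/2)log(2π) + (z − 1/2) log z − z + R(z), where the remainder satisfies 0 < R(z) < 1/(12z). -/
/-!
Let `R x := log Γ(x) - ((x - 1/2) log x - x + log(2π)/2)`. The functional equation of `Γ` gives
`R x - R (x + 1) = (x + 1/2) log(1 + 1/x) - 1`, and expanding the logarithm in powers of
`1/(2x+1)` puts this difference strictly between `0` and `1/(12x(x+1)) = 1/(12x) - 1/(12(x+1))`.
Stirling's formula along the integers together with Euler's limit `Γ(x+n+1) ~ n! n^x` shows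
`R (x + n) → 0`, so `R x = ∑ₙ (R (x+n) - R (x+n+1))` lies strictly between `0` and the
telescoping sum `∑ₙ (1/(12(x+n)) - 1/(12(x+n+1))) = 1/(12x)`.
-/

open Filter Real Topology
open scoped Nat

noncomputable def stirlingRemainder (x : ℝ) : ℝ :=
  log (Gamma x) - ((x - 1 / 2) * log x - x + log (2 * π) / 2)

lemma Antitone.hasSum_sub_add_one {f : ℕ → ℝ} (hf : Antitone f)
    (h : Tendsto f atTop (𝓝 0)) : HasSum (fun n => f n - f (n + 1)) (f 0) := by
  refine (hasSum_iff_tendsto_nat_of_nonneg (fun n => sub_nonneg.2 (hf n.le_succ)) _).2 ?_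
  simp_rw [Finset.sum_range_sub']
  simpa using tendsto_const_nhds.sub h

lemma tendsto_add_mul_log_add_sub_log (s c : ℝ) :
    Tendsto (fun x : ℝ => (x + c) * (log (x + s) - log x)) atTop (𝓝 s) := by
  have h₁ := tendsto_mul_log_one_add_div_atTop s
  have h₂ : Tendsto (fun x : ℝ => log (1 + s / x)) atTop (𝓝 0) := by
    have := h₁.mul tendsto_inv_atTop_zero
    rw [mul_zero] at this
    refine this.congr' ?_
    filter_upwards [eventually_ne_atTop 0] with x hx
    field_simp
  have h := h₁.add (h₂.const_mul c)
  rw [mul_zero, add_zero] at h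
  refine h.congr' ?_
  filter_upwards [eventually_gt_atTop 0, eventually_gt_atTop (-s)] with x hx hxs
  rw [← log_div (by linarith) hx.ne', add_div, div_self hx.ne']
  ring

lemma hasSum_add_half_mul_log_one_add_inv_sub_one {x : ℝ} (hx : 0 < x) :
    HasSum (fun k : ℕ => ((1 / (2 * x + 1)) ^ 2) ^ (k + 1) / (2 * (k + 1) + 1))
      ((x + 1 / 2) * log (1 + x⁻¹) - 1) := by
  have ht : (x + 1 / 2) * 2 * (1 / (2 * x + 1)) = 1 := by field_simp
  have h := (hasSum_nat_add_iff' 1).2 ((hasSum_log_one_add_inv hx).mul_left (x + 1 / 2))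
  convert! h using 2 with k
  · rw [← pow_mul, pow_succ _ (2 * (k + 1))]
    push_cast
    linear_combination (-((1 / (2 * x + 1)) ^ (2 * (k + 1)) / (2 * (k + 1 : ℝ) + 1))) * ht
  · rw [Finset.sum_range_one]
    linear_combination -ht

lemma add_half_mul_log_one_add_inv_sub_one_pos {x : ℝ} (hx : 0 < x) :
    0 < (x + 1 / 2) * log (1 + x⁻¹) - 1 :=
  hasSum_lt (f := 0) (i := 0) (fun k => by positivity) (by rw [Pi.zero_apply]; positivity) hasSum_zero
    (hasSum_add_half_mul_log_one_add_inv_sub_one hx)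

lemma add_half_mul_log_one_add_inv_sub_one_lt {x : ℝ} (hx : 0 < x) :
    (x + 1 / 2) * log (1 + x⁻¹) - 1 < 1 / (12 * x * (x + 1)) := by
  have hr0 : 0 < (1 / (2 * x + 1)) ^ 2 := by positivity
  have hr1 : (1 / (2 * x + 1)) ^ 2 < 1 := by
    rw [div_pow, one_pow, div_lt_one (by positivity)]
    nlinarith
  -- `1/(12x(x+1))` is the sum of the series after its denominators `2k+3` are replaced by `3`
  have hgeom : HasSum (fun k : ℕ => ((1 / (2 * x + 1)) ^ 2) ^ (k + 1) / 3)
      (1 / (12 * x * (x + 1))) := by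
    convert! ((hasSum_geometric_of_lt_one hr0.le hr1).mul_left ((1 / (2 * x + 1)) ^ 2)).div_const 3
      using 1
    · ext k
      ring
    · have : 1 - (1 / (2 * x + 1)) ^ 2 = 4 * x * (x + 1) / (2 * x + 1) ^ 2 := by
        field_simp
        ring
      rw [this]
      field_simp
      ring
  refine hasSum_lt (i := 1) (fun k => ?_) ?_ (hasSum_add_half_mul_log_one_add_inv_sub_one hx) hgeom
  · gcongr
    linarith [(k.cast_nonneg : (0 : ℝ) ≤ k)]
  · gcongr
    norm_num

lemma stirlingRemainder_sub_stirlingRemainder_add_one {x : ℝ} (hx : 0 < x) :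
    stirlingRemainder x - stirlingRemainder (x + 1) = (x + 1 / 2) * log (1 + x⁻¹) - 1 := by
  have hlog : log (1 + x⁻¹) = log (x + 1) - log x := by
    rw [← log_div (by positivity) hx.ne', add_div, div_self hx.ne', one_div]
  rw [stirlingRemainder, stirlingRemainder, Gamma_add_one hx.ne',
    log_mul hx.ne' (Gamma_pos_of_pos hx).ne', hlog]
  ring

lemma stirlingRemainder_sub_stirlingRemainder_add_one_pos {x : ℝ} (hx : 0 < x) :
    0 < stirlingRemainder x - stirlingRemainder (x + 1) := by
  rw [stirlingRemainder_sub_stirlingRemainder_add_one hx]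
  exact add_half_mul_log_one_add_inv_sub_one_pos hx

lemma stirlingRemainder_sub_stirlingRemainder_add_one_lt {x : ℝ} (hx : 0 < x) :
    stirlingRemainder x - stirlingRemainder (x + 1) < 1 / (12 * x) - 1 / (12 * (x + 1)) := by
  rw [stirlingRemainder_sub_stirlingRemainder_add_one hx,
    show 1 / (12 * x) - 1 / (12 * (x + 1)) = 1 / (12 * x * (x + 1)) by field_simp; ring]
  exact add_half_mul_log_one_add_inv_sub_one_lt hx

lemma tendsto_stirlingRemainder_natCast :
    Tendsto (fun n : ℕ => stirlingRemainder n) atTop (𝓝 0) := by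
  have h := ((continuousAt_log (sqrt_pos.2 pi_pos).ne').tendsto.comp
    Stirling.tendsto_stirlingSeq_sqrt_pi).sub_const (log √π)
  rw [sub_self] at h
  -- `stirlingRemainder n = log (stirlingSeq n) - log √π` for `n ≠ 0`
  refine h.congr' ?_
  filter_upwards [eventually_ne_atTop 0] with n hn
  have hn0 : (0 : ℝ) < n := by positivity
  have hfact : log (n ! : ℝ) = log n + log (Gamma n) := by
    rw [← log_mul hn0.ne' (Gamma_pos_of_pos hn0).ne', ← Gamma_add_one hn0.ne',
      Gamma_nat_eq_factorial]
  rw [Function.comp_apply, Stirling.log_stirlingSeq_formula, stirlingRemainder, hfact,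
    log_mul two_ne_zero hn0.ne', log_div hn0.ne' (exp_ne_zero 1), log_exp,
    log_mul two_ne_zero pi_pos.ne', log_sqrt pi_pos.le]
  ring

lemma tendsto_log_Gamma_add_nat_add_one_sub {x : ℝ} (hx : 0 < x) :
    Tendsto (fun n : ℕ => log (Gamma (x + n + 1)) - log n ! - x * log n) atTop (𝓝 0) := by
  have hfeq : ∀ {y : ℝ}, 0 < y → (log ∘ Gamma) (y + 1) = (log ∘ Gamma) y + log y := fun hy => by
    rw [Function.comp_apply, Gamma_add_one hy.ne', log_mul hy.ne' (Gamma_pos_of_pos hy).ne',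
      add_comm, Function.comp_apply]
  have h := (BohrMollerup.tendsto_log_gamma hx).const_sub (log (Gamma x))
  rw [sub_self] at h
  refine h.congr fun n => ?_
  have hsum := BohrMollerup.f_add_nat_eq hfeq hx (n + 1)
  simp only [Function.comp_apply, Nat.cast_add_one, ← add_assoc] at hsum
  rw [BohrMollerup.logGammaSeq, hsum]
  ring

lemma tendsto_stirlingRemainder_add_nat {x : ℝ} (hx : 0 < x) :
    Tendsto (fun n : ℕ => stirlingRemainder (x + n)) atTop (𝓝 0) := by
  rw [← tendsto_add_atTop_iff_nat 1]
  have hnat := (tendsto_add_atTop_iff_nat 1).2 tendsto_stirlingRemainder_natCast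
  have hx1 := (tendsto_add_mul_log_add_sub_log (x + 1) (x + 1 / 2)).comp
    tendsto_natCast_atTop_atTop
  have h1 := (tendsto_add_mul_log_add_sub_log 1 (1 / 2)).comp tendsto_natCast_atTop_atTop
  have h := hnat.add ((tendsto_log_Gamma_add_nat_add_one_sub hx).sub ((hx1.sub h1).sub_const x))
  rw [show (0 : ℝ) + (0 - (x + 1 - 1 - x)) = 0 by ring] at h
  -- `R (x+n+1) - R (n+1)` is Euler's term minus the two log-differences `hx1`, `h1` (and `x`)
  refine h.congr fun n => ?_
  simp only [Function.comp_apply, stirlingRemainder, Nat.cast_add_one, Gamma_nat_eq_factorial,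
    ← add_assoc]
  rw [show (n : ℝ) + x + 1 = x + n + 1 by ring]
  ring

lemma hasSum_stirlingRemainder {x : ℝ} (hx : 0 < x) :
    HasSum (fun n : ℕ => stirlingRemainder (x + n) - stirlingRemainder (x + n + 1))
      (stirlingRemainder x) := by
  have hf : Antitone fun n : ℕ => stirlingRemainder (x + n) := antitone_nat_of_succ_le fun n => by
    have := stirlingRemainder_sub_stirlingRemainder_add_one_pos (x := x + n) (by positivity)
    push_cast
    rw [← add_assoc]
    linarith
  simpa [← add_assoc] using hf.hasSum_sub_add_one (tendsto_stirlingRemainder_add_nat hx)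

lemma hasSum_one_div_twelve_mul_sub {x : ℝ} (hx : 0 < x) :
    HasSum (fun n : ℕ => 1 / (12 * (x + n)) - 1 / (12 * (x + n + 1))) (1 / (12 * x)) := by
  have hf : Antitone fun n : ℕ => 1 / (12 * (x + n)) :=
    antitone_nat_of_succ_le fun n => by push_cast; gcongr; linarith
  simpa [← add_assoc] using hf.hasSum_sub_add_one (tendsto_const_nhds.div_atTop
    ((tendsto_atTop_add_const_left _ x tendsto_natCast_atTop_atTop).const_mul_atTop
      (by norm_num)))

theorem stirling_binet (z : ℝ) (hz : 0 < z) :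
    ∃ R : ℝ, Real.log (Real.Gamma z) =
        Real.log (2 * Real.pi) / 2 + (z - 1 / 2) * Real.log z - z + R ∧
      0 < R ∧ R < 1 / (12 * z) := by
  have hpos (n : ℕ) : 0 < z + n := by positivity
  refine ⟨stirlingRemainder z, by rw [stirlingRemainder]; ring, ?_, ?_⟩
  · exact hasSum_lt (f := 0) (i := 0)
      (fun n => (stirlingRemainder_sub_stirlingRemainder_add_one_pos (hpos n)).le)
      (by simpa using stirlingRemainder_sub_stirlingRemainder_add_one_pos hz)
      hasSum_zero (hasSum_stirlingRemainder hz)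
  · exact hasSum_lt (i := 0)
      (fun n => (stirlingRemainder_sub_stirlingRemainder_add_one_lt (hpos n)).le)
      (by simpa using stirlingRemainder_sub_stirlingRemainder_add_one_lt hz)
      (hasSum_stirlingRemainder hz) (hasSum_one_div_twelve_mul_sub hz)
end
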